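/- Let H be a cocommutative Hopf quasigroup over a field k (in the symmetric category of k-vector spaces). Then the opposite magma H^op = (H, 1_H, μ ∘ swap), equipped with the coaction ρ(x) = x_(1) ⊗ λ(x_(2)), is a right H-comodule magma. -/
import Mathlib


open TensorProduct

noncomputable section

namespace DoiHopf

variable (k : Type) [Field k]
variable (H : Type) [AddCommGroup H] [Module k H]

/-- A Hopf quasigroup structure on `H`: a unital (not necessarily associative) magma and a
coassociative counital comonoid such that `eps` and `delta` are morphisms of unital magmas,
with an antipode `lam` satisfying the four Hopf quasigroup antipode identities. -/
structure IsHopfQuasigroup (mul : H ⊗[k] H →ₗ[k] H) (one : H)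
    (eps : H →ₗ[k] k) (delta : H →ₗ[k] H ⊗[k] H) (lam : H →ₗ[k] H) : Prop where
  one_mul : ∀ x, mul (one ⊗ₜ[k] x) = x
  mul_one : ∀ x, mul (x ⊗ₜ[k] one) = x
  coassoc : (TensorProduct.assoc k H H H).toLinearMap ∘ₗ delta.rTensor H ∘ₗ delta
      = delta.lTensor H ∘ₗ delta
  counit_left : ∀ x, (TensorProduct.lid k H) ((eps.rTensor H) (delta x)) = x
  counit_right : ∀ x, (TensorProduct.rid k H) ((eps.lTensor H) (delta x)) = x
  eps_mul : ∀ x y, eps (mul (x ⊗ₜ[k] y)) = eps x * eps y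
  eps_one : eps one = 1
  delta_mul : delta ∘ₗ mul = (TensorProduct.map mul mul)
      ∘ₗ (TensorProduct.tensorTensorTensorComm k H H H H).toLinearMap
      ∘ₗ (TensorProduct.map delta delta)
  delta_one : delta one = one ⊗ₜ[k] one
  antipode_left₁ : mul ∘ₗ (TensorProduct.map lam mul)
      ∘ₗ (TensorProduct.assoc k H H H).toLinearMap ∘ₗ delta.rTensor H
      = (TensorProduct.lid k H).toLinearMap ∘ₗ eps.rTensor H
  antipode_left₂ : mul ∘ₗ (TensorProduct.map (LinearMap.id : H →ₗ[k] H) (mul ∘ₗ lam.rTensor H))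
      ∘ₗ (TensorProduct.assoc k H H H).toLinearMap ∘ₗ delta.rTensor H
      = (TensorProduct.lid k H).toLinearMap ∘ₗ eps.rTensor H
  antipode_right₁ : mul ∘ₗ (TensorProduct.map mul lam)
      ∘ₗ (TensorProduct.assoc k H H H).symm.toLinearMap ∘ₗ delta.lTensor H
      = (TensorProduct.rid k H).toLinearMap ∘ₗ eps.lTensor H
  antipode_right₂ : mul ∘ₗ (TensorProduct.map (mul ∘ₗ lam.lTensor H) (LinearMap.id : H →ₗ[k] H))
      ∘ₗ (TensorProduct.assoc k H H H).symm.toLinearMap ∘ₗ delta.lTensor H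
      = (TensorProduct.rid k H).toLinearMap ∘ₗ eps.lTensor H

/-- A right `H`-comodule magma structure on `B`: a unital magma which is a right `H`-comodule
whose coaction is multiplicative for the tensor product magma structure on `B ⊗ H` and
sends the unit to `1_B ⊗ 1_H`. -/
structure IsComoduleMagma (mul : H ⊗[k] H →ₗ[k] H) (one : H)
    (eps : H →ₗ[k] k) (delta : H →ₗ[k] H ⊗[k] H)
    {B : Type} [AddCommGroup B] [Module k B]
    (mulB : B ⊗[k] B →ₗ[k] B) (oneB : B) (rho : B →ₗ[k] B ⊗[k] H) : Prop where
  oneB_mul : ∀ b, mulB (oneB ⊗ₜ[k] b) = b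
  mul_oneB : ∀ b, mulB (b ⊗ₜ[k] oneB) = b
  counit : ∀ b, (TensorProduct.rid k B) ((eps.lTensor B) (rho b)) = b
  coassoc : rho.rTensor H ∘ₗ rho
      = (TensorProduct.assoc k B H H).symm.toLinearMap ∘ₗ delta.lTensor B ∘ₗ rho
  mul_compat : rho ∘ₗ mulB = (TensorProduct.map mulB mul)
      ∘ₗ (TensorProduct.tensorTensorTensorComm k B H B H).toLinearMap
      ∘ₗ (TensorProduct.map rho rho)
  one_compat : rho oneB = oneB ⊗ₜ[k] one

/-- The generic "action against `f : H → B'` after the coaction" endomorphism; for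
`f = h ∘ λ` this is the canonical idempotent `q` of the paper. -/
def act {M B' : Type} [AddCommGroup M] [Module k M] [AddCommGroup B'] [Module k B']
    (phi : M ⊗[k] B' →ₗ[k] M) (rho : M →ₗ[k] M ⊗[k] H) (f : H →ₗ[k] B') : M →ₗ[k] M :=
  phi ∘ₗ f.lTensor M ∘ₗ rho

variable (mul : H ⊗[k] H →ₗ[k] H) (one : H) (eps : H →ₗ[k] k)
variable (delta : H →ₗ[k] H ⊗[k] H) (lam : H →ₗ[k] H)



/-- `Wmap ((a ⊗ a') ⊗ y) = λ(a y) a'`. -/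
def Wmap (mul : H ⊗[k] H →ₗ[k] H) (lam : H →ₗ[k] H) :
    (H ⊗[k] H) ⊗[k] H →ₗ[k] H :=
  mul ∘ₗ (TensorProduct.map (lam ∘ₗ mul) (LinearMap.id : H →ₗ[k] H))
    ∘ₗ (TensorProduct.assoc k H H H).symm.toLinearMap
    ∘ₗ (LinearMap.lTensor H (TensorProduct.comm k H H).toLinearMap)
    ∘ₗ (TensorProduct.assoc k H H H).toLinearMap

@[simp] lemma Wmap_tmul (mul : H ⊗[k] H →ₗ[k] H) (lam : H →ₗ[k] H) (a a' y : H) :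
    Wmap k H mul lam ((a ⊗ₜ[k] a') ⊗ₜ[k] y) = mul (lam (mul (a ⊗ₜ[k] y)) ⊗ₜ[k] a') := by
  simp [Wmap]

/-- `Vmap ((a ⊗ a') ⊗ ((b ⊗ b') ⊗ c)) = λ(a b) ((a' b') λ(c))`. -/
def Vmap (mul : H ⊗[k] H →ₗ[k] H) (lam : H →ₗ[k] H) :
    (H ⊗[k] H) ⊗[k] ((H ⊗[k] H) ⊗[k] H) →ₗ[k] H :=
  mul ∘ₗ (TensorProduct.map (lam ∘ₗ mul) (mul ∘ₗ (TensorProduct.map mul lam)))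
    ∘ₗ (TensorProduct.map LinearMap.id (TensorProduct.assoc k H H H).symm.toLinearMap)
    ∘ₗ (TensorProduct.tensorTensorTensorComm k H H H (H ⊗[k] H)).toLinearMap
    ∘ₗ (TensorProduct.map LinearMap.id (TensorProduct.assoc k H H H).toLinearMap)

@[simp] lemma Vmap_tmul (mul : H ⊗[k] H →ₗ[k] H) (lam : H →ₗ[k] H) (a a' b b' c : H) :
    Vmap k H mul lam ((a ⊗ₜ[k] a') ⊗ₜ[k] ((b ⊗ₜ[k] b') ⊗ₜ[k] c))
      = mul (lam (mul (a ⊗ₜ[k] b)) ⊗ₜ[k] mul (mul (a' ⊗ₜ[k] b') ⊗ₜ[k] lam c)) := by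
  simp [Vmap, TensorProduct.tensorTensorTensorComm]

/-- `starLmap (z ⊗ (c ⊗ d)) = (z c) ⊗ d`. -/
def starLmap (mul : H ⊗[k] H →ₗ[k] H) : H ⊗[k] (H ⊗[k] H) →ₗ[k] H ⊗[k] H :=
  (TensorProduct.map mul LinearMap.id) ∘ₗ (TensorProduct.assoc k H H H).symm.toLinearMap

@[simp] lemma starLmap_tmul (mul : H ⊗[k] H →ₗ[k] H) (z c d : H) :
    starLmap k H mul (z ⊗ₜ[k] (c ⊗ₜ[k] d)) = mul (z ⊗ₜ[k] c) ⊗ₜ[k] d := by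
  simp [starLmap]

/-- `starRmap (z ⊗ (c ⊗ d)) = c ⊗ (z d)`. -/
def starRmap (mul : H ⊗[k] H →ₗ[k] H) : H ⊗[k] (H ⊗[k] H) →ₗ[k] H ⊗[k] H :=
  (TensorProduct.map LinearMap.id mul) ∘ₗ (TensorProduct.assoc k H H H).toLinearMap
    ∘ₗ (TensorProduct.map (TensorProduct.comm k H H).toLinearMap LinearMap.id)
    ∘ₗ (TensorProduct.assoc k H H H).symm.toLinearMap

@[simp] lemma starRmap_tmul (mul : H ⊗[k] H →ₗ[k] H) (z c d : H) :
    starRmap k H mul (z ⊗ₜ[k] (c ⊗ₜ[k] d)) = c ⊗ₜ[k] mul (z ⊗ₜ[k] d) := by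
  simp [starRmap]

/-- `Theta ((a ⊗ b) ⊗ (e ⊗ f)) = e ⊗ λ(a)(b f)`. -/
def Theta (mul : H ⊗[k] H →ₗ[k] H) (lam : H →ₗ[k] H) :
    (H ⊗[k] H) ⊗[k] (H ⊗[k] H) →ₗ[k] H ⊗[k] H :=
  (LinearMap.lTensor H (mul ∘ₗ TensorProduct.map lam mul))
    ∘ₗ (TensorProduct.assoc k H H (H ⊗[k] H)).toLinearMap
    ∘ₗ (TensorProduct.map (TensorProduct.comm k H H).toLinearMap LinearMap.id)
    ∘ₗ (TensorProduct.tensorTensorTensorComm k H H H H).toLinearMap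

@[simp] lemma Theta_tmul (mul : H ⊗[k] H →ₗ[k] H) (lam : H →ₗ[k] H) (a b e f : H) :
    Theta k H mul lam ((a ⊗ₜ[k] b) ⊗ₜ[k] (e ⊗ₜ[k] f))
      = e ⊗ₜ[k] mul (lam a ⊗ₜ[k] mul (b ⊗ₜ[k] f)) := by
  simp [Theta, TensorProduct.tensorTensorTensorComm]

/-- `Jmap ((u ⊗ z) ⊗ (e ⊗ f)) = [μ(λ ⊗ μ)(assoc (u ⊗ e))] ⊗ (z f)`. -/
def Jmap (mul : H ⊗[k] H →ₗ[k] H) (lam : H →ₗ[k] H) :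
    ((H ⊗[k] H) ⊗[k] H) ⊗[k] (H ⊗[k] H) →ₗ[k] H ⊗[k] H :=
  (TensorProduct.map (mul ∘ₗ TensorProduct.map lam mul ∘ₗ (TensorProduct.assoc k H H H).toLinearMap) mul)
    ∘ₗ (TensorProduct.tensorTensorTensorComm k (H ⊗[k] H) H H H).toLinearMap

@[simp] lemma Jmap_tmul (mul : H ⊗[k] H →ₗ[k] H) (lam : H →ₗ[k] H) (u : H ⊗[k] H) (z e f : H) :
    Jmap k H mul lam ((u ⊗ₜ[k] z) ⊗ₜ[k] (e ⊗ₜ[k] f))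
      = mul ((TensorProduct.map lam mul) ((TensorProduct.assoc k H H H) (u ⊗ₜ[k] e)))
          ⊗ₜ[k] mul (z ⊗ₜ[k] f) := by
  simp [Jmap, TensorProduct.tensorTensorTensorComm]

/-- `Phii ((a ⊗ (m ⊗ n)) ⊗ c) = (a ⊗ m) ⊗ (n ⊗ c)`. -/
def Phii : (H ⊗[k] (H ⊗[k] H)) ⊗[k] H →ₗ[k] (H ⊗[k] H) ⊗[k] (H ⊗[k] H) :=
  (TensorProduct.assoc k H H (H ⊗[k] H)).symm.toLinearMap
    ∘ₗ (LinearMap.lTensor H (TensorProduct.assoc k H H H).toLinearMap)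
    ∘ₗ (TensorProduct.assoc k H (H ⊗[k] H) H).toLinearMap

@[simp] lemma Phii_tmul (a m n c : H) :
    Phii k H ((a ⊗ₜ[k] (m ⊗ₜ[k] n)) ⊗ₜ[k] c) = (a ⊗ₜ[k] m) ⊗ₜ[k] (n ⊗ₜ[k] c) := by
  simp [Phii]

/-- `Kmap F x = Σ δ(x₁) ⋆ F(x₂)` (factorwise product). -/
def Kmap (mul : H ⊗[k] H →ₗ[k] H) (delta : H →ₗ[k] H ⊗[k] H) (F : H →ₗ[k] H ⊗[k] H) :
    H →ₗ[k] H ⊗[k] H :=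
  (TensorProduct.map mul mul) ∘ₗ (TensorProduct.tensorTensorTensorComm k H H H H).toLinearMap
    ∘ₗ (TensorProduct.map delta F) ∘ₗ delta

/-- `MFmap F x = Σ F¹(x₂) ⊗ x₁ F²(x₂)`. -/
def MFmap (mul : H ⊗[k] H →ₗ[k] H) (delta : H →ₗ[k] H ⊗[k] H) (F : H →ₗ[k] H ⊗[k] H) :
    H →ₗ[k] H ⊗[k] H :=
  starRmap k H mul ∘ₗ (LinearMap.lTensor H F) ∘ₗ delta

/-- `InnerK K x = Σ (λ(x₁) ⊗ 1) ⋆ K(x₂)`. -/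
def InnerK (mul : H ⊗[k] H →ₗ[k] H) (delta : H →ₗ[k] H ⊗[k] H) (lam : H →ₗ[k] H)
    (K : H →ₗ[k] H ⊗[k] H) : H →ₗ[k] H ⊗[k] H :=
  starLmap k H mul ∘ₗ (TensorProduct.map lam K) ∘ₗ delta

section Aux
variable {k H mul one eps delta lam}
variable (hH : IsHopfQuasigroup k H mul one eps delta lam)
include hH

lemma pL1 (x y : H) :
    mul ((TensorProduct.map lam mul) ((TensorProduct.assoc k H H H) (delta x ⊗ₜ[k] y)))
      = eps x • y := by
  simpa using LinearMap.congr_fun hH.antipode_left₁ (x ⊗ₜ[k] y)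

lemma pR1 (z c : H) :
    mul ((TensorProduct.map mul lam) ((TensorProduct.assoc k H H H).symm (z ⊗ₜ[k] delta c)))
      = eps c • z := by
  simpa using LinearMap.congr_fun hH.antipode_right₁ (z ⊗ₜ[k] c)

lemma pcoassoc (x : H) :
    (TensorProduct.assoc k H H H) ((delta.rTensor H) (delta x)) = (delta.lTensor H) (delta x) :=
  LinearMap.congr_fun hH.coassoc x

lemma pcoassoc' (x : H) :
    (TensorProduct.assoc k H H H).symm ((delta.lTensor H) (delta x))
      = (delta.rTensor H) (delta x) := by
  rw [← pcoassoc hH]; simp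

lemma pdelta_mul (x y : H) :
    delta (mul (x ⊗ₜ[k] y)) = (TensorProduct.map mul mul)
      ((TensorProduct.tensorTensorTensorComm k H H H H) (delta x ⊗ₜ[k] delta y)) :=
  LinearMap.congr_fun hH.delta_mul (x ⊗ₜ[k] y)

/-- C1: `Σ λ(x₁ y) x₂ = ε(x) λ(y)`. -/
lemma C1 (x y : H) :
    Wmap k H mul lam (delta x ⊗ₜ[k] y) = eps x • lam y := by
  have wayB : ∀ (t s : H ⊗[k] H),
      Vmap k H mul lam (t ⊗ₜ[k] ((TensorProduct.assoc k H H H).symm ((delta.lTensor H) s)))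
        = Wmap k H mul lam (t ⊗ₜ[k] ((TensorProduct.rid k H) ((eps.lTensor H) s))) := by
    intro t s
    induction s using TensorProduct.induction_on with
    | zero => simp
    | tmul b c =>
      have inner : ∀ (u : H ⊗[k] H) (a a' b : H),
          Vmap k H mul lam ((a ⊗ₜ[k] a') ⊗ₜ[k] ((TensorProduct.assoc k H H H).symm (b ⊗ₜ[k] u)))
            = mul (lam (mul (a ⊗ₜ[k] b)) ⊗ₜ[k]
                mul ((TensorProduct.map mul lam) ((TensorProduct.assoc k H H H).symm (a' ⊗ₜ[k] u)))) := by
        intro u a a' b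
        induction u using TensorProduct.induction_on with
        | zero => simp
        | tmul c1 c2 => simp
        | add u v hu hv => simp only [tmul_add, map_add, hu, hv]
      induction t using TensorProduct.induction_on with
      | zero => simp
      | tmul a a' =>
        simp only [LinearMap.lTensor_tmul]
        rw [inner, pR1 hH]
        simp
      | add u v hu hv => simp only [add_tmul, map_add, hu, hv]
    | add u v hu hv => simp only [map_add, tmul_add, hu, hv]
  have wayA : ∀ (s : H ⊗[k] H),
      Vmap k H mul lam (delta x ⊗ₜ[k] ((delta.rTensor H) s))
        = eps x • lam ((TensorProduct.lid k H) ((eps.rTensor H) s)) := by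
    have inner : ∀ (t u : H ⊗[k] H) (c : H),
        Vmap k H mul lam (t ⊗ₜ[k] (u ⊗ₜ[k] c))
          = mul ((TensorProduct.map lam mul) ((TensorProduct.assoc k H H H)
              (((TensorProduct.map mul mul) ((TensorProduct.tensorTensorTensorComm k H H H H)
                (t ⊗ₜ[k] u))) ⊗ₜ[k] lam c))) := by
      intro t u c
      induction t using TensorProduct.induction_on with
      | zero => simp
      | tmul a a' =>
        induction u using TensorProduct.induction_on with
        | zero => simp
        | tmul b1 b2 => simp [TensorProduct.tensorTensorTensorComm]
        | add u v hu hv =>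
          simp only [tmul_add, add_tmul, map_add, hu, hv]
      | add u v hu hv => simp only [tmul_add, add_tmul, map_add, hu, hv]
    intro s
    induction s using TensorProduct.induction_on with
    | zero => simp
    | tmul b c =>
      simp only [LinearMap.rTensor_tmul]
      rw [inner, ← pdelta_mul hH, pL1 hH]
      simp [hH.eps_mul, mul_smul, smul_comm (eps x) (eps b)]
    | add u v hu hv => simp only [map_add, tmul_add, hu, hv, smul_add]
  calc Wmap k H mul lam (delta x ⊗ₜ[k] y)
      = Wmap k H mul lam (delta x ⊗ₜ[k] ((TensorProduct.rid k H) ((eps.lTensor H) (delta y)))) := by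
        rw [hH.counit_right]
    _ = Vmap k H mul lam (delta x ⊗ₜ[k]
          ((TensorProduct.assoc k H H H).symm ((delta.lTensor H) (delta y)))) := (wayB _ _).symm
    _ = Vmap k H mul lam (delta x ⊗ₜ[k] ((delta.rTensor H) (delta y))) := by rw [pcoassoc' hH]
    _ = eps x • lam ((TensorProduct.lid k H) ((eps.rTensor H) (delta y))) := wayA _
    _ = eps x • lam y := by rw [hH.counit_left]

/-- Anti-multiplicativity: `λ(x y) = λ(y) λ(x)`. -/
lemma anti_mul (x y : H) :
    lam (mul (x ⊗ₜ[k] y)) = mul (lam y ⊗ₜ[k] lam x) := by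
  set Q : (H ⊗[k] H) ⊗[k] H →ₗ[k] H :=
    mul ∘ₗ (TensorProduct.map (Wmap k H mul lam ∘ₗ ((TensorProduct.mk k (H ⊗[k] H) H).flip y)) lam)
    with hQ
  have Qtmul : ∀ (t : H ⊗[k] H) (c : H), Q (t ⊗ₜ[k] c)
      = mul (Wmap k H mul lam (t ⊗ₜ[k] y) ⊗ₜ[k] lam c) := by
    intro t c; simp [hQ]
  have route1 : ∀ (s : H ⊗[k] H),
      Q ((delta.rTensor H) s)
        = mul (lam y ⊗ₜ[k] lam ((TensorProduct.lid k H) ((eps.rTensor H) s))) := by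
    intro s
    induction s using TensorProduct.induction_on with
    | zero => simp
    | tmul a c =>
      simp only [LinearMap.rTensor_tmul]
      rw [Qtmul, C1 hH]
      simp [TensorProduct.smul_tmul']
    | add u v hu hv => simp only [map_add, tmul_add, hu, hv]
  have route2 : ∀ (t : H ⊗[k] H),
      Q ((TensorProduct.assoc k H H H).symm ((delta.lTensor H) t))
        = lam (mul (((TensorProduct.rid k H) ((eps.lTensor H) t)) ⊗ₜ[k] y)) := by
    intro t
    induction t using TensorProduct.induction_on with
    | zero => simp
    | tmul a c =>
      have inner : ∀ (u : H ⊗[k] H) (a : H),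
          Q ((TensorProduct.assoc k H H H).symm (a ⊗ₜ[k] u))
            = mul ((TensorProduct.map mul lam)
                ((TensorProduct.assoc k H H H).symm (lam (mul (a ⊗ₜ[k] y)) ⊗ₜ[k] u))) := by
        intro u a
        induction u using TensorProduct.induction_on with
        | zero => simp
        | tmul c1 c2 => simp [Qtmul]
        | add u v hu hv => simp only [tmul_add, map_add, hu, hv]
      simp only [LinearMap.lTensor_tmul]
      rw [inner, pR1 hH]
      simp [← TensorProduct.smul_tmul']
    | add u v hu hv => simp only [map_add, tmul_add, add_tmul, hu, hv]
  calc lam (mul (x ⊗ₜ[k] y))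
      = lam (mul (((TensorProduct.rid k H) ((eps.lTensor H) (delta x))) ⊗ₜ[k] y)) := by
        rw [hH.counit_right]
    _ = Q ((TensorProduct.assoc k H H H).symm ((delta.lTensor H) (delta x))) := (route2 _).symm
    _ = Q ((delta.rTensor H) (delta x)) := by rw [pcoassoc' hH]
    _ = mul (lam y ⊗ₜ[k] lam ((TensorProduct.lid k H) ((eps.rTensor H) (delta x)))) := route1 _
    _ = mul (lam y ⊗ₜ[k] lam x) := by rw [hH.counit_left]


/-- `Σ x₁ λ(x₂) = ε(x) 1`. -/
lemma sum_mul_lam (x : H) : mul ((lam.lTensor H) (delta x)) = eps x • one := by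
  have h := pR1 hH one x
  rw [show (TensorProduct.map mul lam) ((TensorProduct.assoc k H H H).symm (one ⊗ₜ[k] delta x))
        = (lam.lTensor H) (delta x) from ?_] at h
  · exact h
  · induction delta x using TensorProduct.induction_on with
    | zero => simp
    | tmul a b => simp [hH.one_mul]
    | add u v hu hv => simp [tmul_add, hu, hv]

lemma lam_one : lam one = one := by
  have h := pL1 hH one one
  rw [hH.delta_one, hH.eps_one] at h
  simpa [hH.mul_one] using h

/-- `ε ∘ λ = ε`. -/
lemma eps_lam (x : H) : eps (lam x) = eps x := by
  have key : (TensorProduct.lid k k) ((TensorProduct.map (eps ∘ₗ lam) eps) (delta x)) = eps x := by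
    have h := congrArg eps (pL1 hH x one)
    rw [show eps (mul ((TensorProduct.map lam mul) ((TensorProduct.assoc k H H H) (delta x ⊗ₜ[k] one))))
          = (TensorProduct.lid k k) ((TensorProduct.map (eps ∘ₗ lam) eps) (delta x)) from ?_] at h
    · simpa [hH.eps_one] using h
    · induction delta x using TensorProduct.induction_on with
      | zero => simp
      | tmul a b => simp [hH.mul_one, hH.eps_mul, mul_comm]
      | add u v hu hv => simp [add_tmul, hu, hv]
  have recon : eps (lam ((TensorProduct.rid k H) ((eps.lTensor H) (delta x))))
      = (TensorProduct.lid k k) ((TensorProduct.map (eps ∘ₗ lam) eps) (delta x)) := by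
    induction delta x using TensorProduct.induction_on with
    | zero => simp
    | tmul a b => simp [mul_comm]
    | add u v hu hv => simp [hu, hv]
  rw [hH.counit_right] at recon
  rw [recon, key]

lemma thetaKey (w : H) (v : H ⊗[k] H) :
    Theta k H mul lam (delta w ⊗ₜ[k] v) = eps w • v := by
  induction v using TensorProduct.induction_on with
  | zero => simp
  | tmul e f =>
    have h : ∀ (t : H ⊗[k] H), Theta k H mul lam (t ⊗ₜ[k] (e ⊗ₜ[k] f))
        = e ⊗ₜ[k] (mul ((TensorProduct.map lam mul) ((TensorProduct.assoc k H H H) (t ⊗ₜ[k] f)))) := by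
      intro t
      induction t using TensorProduct.induction_on with
      | zero => simp
      | tmul a b => simp
      | add u v hu hv => simp only [add_tmul, map_add, hu, hv, TensorProduct.tmul_add]
    rw [h, pL1 hH]
    simp
  | add u v hu hv => simp only [tmul_add, map_add, hu, hv, smul_add]

lemma stageN (F : H →ₗ[k] H ⊗[k] H) (x : H) :
    starRmap k H mul ((TensorProduct.map lam (MFmap k H mul delta F)) (delta x)) = F x := by
  have nat1 : ∀ (t : H ⊗[k] H),
      (TensorProduct.map lam (MFmap k H mul delta F)) t
        = (LinearMap.lTensor H (starRmap k H mul ∘ₗ LinearMap.lTensor H F))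
            ((lam.rTensor (H ⊗[k] H)) ((delta.lTensor H) t)) := by
    intro t
    induction t using TensorProduct.induction_on with
    | zero => simp
    | tmul u w => simp [MFmap]
    | add u v hu hv => simp only [map_add, hu, hv]
  rw [nat1, ← pcoassoc hH]
  have main : ∀ (t : H ⊗[k] H),
      starRmap k H mul ((LinearMap.lTensor H (starRmap k H mul ∘ₗ LinearMap.lTensor H F))
        ((lam.rTensor (H ⊗[k] H)) ((TensorProduct.assoc k H H H)
          ((delta.rTensor H) t))))
        = F ((TensorProduct.lid k H) ((eps.rTensor H) t)) := by
    intro t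
    induction t using TensorProduct.induction_on with
    | zero => simp
    | tmul w c =>
      have h1 : ∀ (u : H ⊗[k] H),
          starRmap k H mul ((LinearMap.lTensor H (starRmap k H mul ∘ₗ LinearMap.lTensor H F))
            ((lam.rTensor (H ⊗[k] H)) ((TensorProduct.assoc k H H H) (u ⊗ₜ[k] c))))
            = Theta k H mul lam (u ⊗ₜ[k] F c) := by
        intro u
        induction u using TensorProduct.induction_on with
        | zero => simp
        | tmul a b =>
          simp only [TensorProduct.assoc_tmul, LinearMap.rTensor_tmul, LinearMap.lTensor_tmul,
            LinearMap.comp_apply]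
          generalize F c = v
          induction v using TensorProduct.induction_on with
          | zero => simp
          | tmul e f => simp
          | add u v hu hv => simp only [TensorProduct.tmul_add, map_add, hu, hv]
        | add u v hu hv => simp only [add_tmul, map_add, hu, hv]
      simp only [LinearMap.rTensor_tmul]
      rw [h1, thetaKey hH]
      simp
    | add u v hu hv => simp only [map_add, tmul_add, hu, hv, smul_add]
  rw [main, hH.counit_left]

lemma stageM (F : H →ₗ[k] H ⊗[k] H) (x : H) :
    InnerK k H mul delta lam (Kmap k H mul delta F) x = MFmap k H mul delta F x := by
  set gK : H ⊗[k] H →ₗ[k] H ⊗[k] H :=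
    (TensorProduct.map mul mul) ∘ₗ (TensorProduct.tensorTensorTensorComm k H H H H).toLinearMap
      ∘ₗ (TensorProduct.map delta F) with hgK
  have nat2 : ∀ (t : H ⊗[k] H),
      (TensorProduct.map lam (Kmap k H mul delta F)) t
        = (LinearMap.lTensor H gK) ((lam.rTensor (H ⊗[k] H)) ((delta.lTensor H) t)) := by
    intro t
    induction t using TensorProduct.induction_on with
    | zero => simp
    | tmul u w => simp [Kmap, hgK]
    | add u v hu hv => simp only [map_add, hu, hv]
  show starLmap k H mul ((TensorProduct.map lam (Kmap k H mul delta F)) (delta x)) = _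
  rw [nat2, ← pcoassoc hH]
  have main2 : ∀ (t : H ⊗[k] H),
      starLmap k H mul ((LinearMap.lTensor H gK)
        ((lam.rTensor (H ⊗[k] H)) ((TensorProduct.assoc k H H H) ((delta.rTensor H) t))))
        = starRmap k H mul ((LinearMap.lTensor H F) t) := by
    intro t
    induction t using TensorProduct.induction_on with
    | zero => simp
    | tmul w c =>
      have hA : ∀ (u : H ⊗[k] H),
          starLmap k H mul ((LinearMap.lTensor H gK)
            ((lam.rTensor (H ⊗[k] H)) ((TensorProduct.assoc k H H H) (u ⊗ₜ[k] c))))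
            = Jmap k H mul lam (((TensorProduct.assoc k H H H).symm ((delta.lTensor H) u)) ⊗ₜ[k] F c) := by
        intro u
        induction u using TensorProduct.induction_on with
        | zero => simp
        | tmul a b =>
          have sub : ∀ (p v : H ⊗[k] H),
              starLmap k H mul (lam a ⊗ₜ[k] ((TensorProduct.map mul mul)
                ((TensorProduct.tensorTensorTensorComm k H H H H) (p ⊗ₜ[k] v))))
                = Jmap k H mul lam (((TensorProduct.assoc k H H H).symm (a ⊗ₜ[k] p)) ⊗ₜ[k] v) := by
            intro p v
            induction p using TensorProduct.induction_on with
            | zero => simp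
            | tmul b1 b2 =>
              induction v using TensorProduct.induction_on with
              | zero => simp
              | tmul e f => simp [TensorProduct.tensorTensorTensorComm]
              | add u v hu hv => simp only [TensorProduct.tmul_add, map_add, hu, hv]
            | add u v hu hv => simp only [TensorProduct.tmul_add, add_tmul, map_add, hu, hv]
          simp only [TensorProduct.assoc_tmul, LinearMap.rTensor_tmul, LinearMap.lTensor_tmul,
            hgK, LinearMap.comp_apply]
          exact sub (delta b) (F c)
        | add u v hu hv => simp only [add_tmul, map_add, hu, hv, TensorProduct.tmul_add]
      have hB : ∀ (t : H ⊗[k] H) (v : H ⊗[k] H),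
          Jmap k H mul lam (((delta.rTensor H) t) ⊗ₜ[k] v)
            = starRmap k H mul (((TensorProduct.lid k H) ((eps.rTensor H) t)) ⊗ₜ[k] v) := by
        intro t v
        induction t using TensorProduct.induction_on with
        | zero => simp
        | tmul w1 w2 =>
          induction v using TensorProduct.induction_on with
          | zero => simp
          | tmul e f =>
            simp only [LinearMap.rTensor_tmul, Jmap_tmul]
            rw [pL1 hH]
            simp [← TensorProduct.smul_tmul']
          | add u v hu hv => simp only [TensorProduct.tmul_add, map_add, hu, hv]
        | add u v hu hv => simp only [add_tmul, map_add, hu, hv]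
      simp only [LinearMap.rTensor_tmul]
      rw [hA (delta w), pcoassoc' hH, hB, hH.counit_left]
      simp
    | add u v hu hv => simp only [map_add, tmul_add, hu, hv]
  rw [main2]
  rfl

lemma KPhi (x : H) :
    Kmap k H mul delta (delta ∘ₗ lam) x = eps x • (one ⊗ₜ[k] one) := by
  have h : ∀ (t : H ⊗[k] H),
      (TensorProduct.map mul mul) ((TensorProduct.tensorTensorTensorComm k H H H H)
        ((TensorProduct.map delta (delta ∘ₗ lam)) t)) = delta (mul ((lam.lTensor H) t)) := by
    intro t
    induction t using TensorProduct.induction_on with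
    | zero => simp
    | tmul a b => simp [pdelta_mul hH]
    | add u v hu hv => simp only [map_add, hu, hv]
  show (TensorProduct.map mul mul) ((TensorProduct.tensorTensorTensorComm k H H H H)
        ((TensorProduct.map delta (delta ∘ₗ lam)) (delta x))) = _
  rw [h, sum_mul_lam hH]
  simp [hH.delta_one]

lemma midswap (hcc : (TensorProduct.comm k H H).toLinearMap ∘ₗ delta = delta) (x : H) :
    (TensorProduct.tensorTensorTensorComm k H H H H)
      ((TensorProduct.map delta delta) (delta x)) = (TensorProduct.map delta delta) (delta x) := by
  have hco : delta.rTensor H ∘ₗ delta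
      = (TensorProduct.assoc k H H H).symm.toLinearMap ∘ₗ delta.lTensor H ∘ₗ delta :=
    LinearMap.ext fun y => (pcoassoc' hH y).symm
  have n1 : ∀ (t : H ⊗[k] H),
      (TensorProduct.map delta delta) t = (delta.rTensor (H ⊗[k] H)) ((delta.lTensor H) t) := by
    intro t
    induction t using TensorProduct.induction_on with
    | zero => simp
    | tmul a b => simp
    | add u v hu hv => simp only [map_add, hu, hv]
  have n2 : ∀ (s : (H ⊗[k] H) ⊗[k] H),
      (delta.rTensor (H ⊗[k] H)) ((TensorProduct.assoc k H H H) s)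
        = (TensorProduct.assoc k (H ⊗[k] H) H H) (((delta.rTensor H).rTensor H) s) := by
    intro s
    induction s using TensorProduct.induction_on with
    | zero => simp
    | tmul r c =>
      induction r using TensorProduct.induction_on with
      | zero => simp
      | tmul a b => simp
      | add u v hu hv => simp only [add_tmul, map_add, hu, hv]
    | add u v hu hv => simp only [map_add, hu, hv]
  have n3 : ∀ (w : (H ⊗[k] (H ⊗[k] H)) ⊗[k] H),
      (TensorProduct.assoc k (H ⊗[k] H) H H)
        (((TensorProduct.assoc k H H H).symm.toLinearMap.rTensor H) w) = Phii k H w := by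
    intro w
    induction w using TensorProduct.induction_on with
    | zero => simp
    | tmul r c =>
      induction r using TensorProduct.induction_on with
      | zero => simp
      | tmul a mn =>
        induction mn using TensorProduct.induction_on with
        | zero => simp
        | tmul m n => simp
        | add u v hu hv => simp only [TensorProduct.tmul_add, add_tmul, map_add, hu, hv]
      | add u v hu hv => simp only [add_tmul, map_add, hu, hv]
    | add u v hu hv => simp only [map_add, hu, hv]
  have n4 : ∀ (w : (H ⊗[k] (H ⊗[k] H)) ⊗[k] H),
      (TensorProduct.tensorTensorTensorComm k H H H H) (Phii k H w)
        = Phii k H ((((TensorProduct.comm k H H).toLinearMap.lTensor H).rTensor H) w) := by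
    intro w
    induction w using TensorProduct.induction_on with
    | zero => simp
    | tmul r c =>
      induction r using TensorProduct.induction_on with
      | zero => simp
      | tmul a mn =>
        induction mn using TensorProduct.induction_on with
        | zero => simp
        | tmul m n => simp [TensorProduct.tensorTensorTensorComm]
        | add u v hu hv => simp only [TensorProduct.tmul_add, add_tmul, map_add, hu, hv]
      | add u v hu hv => simp only [add_tmul, map_add, hu, hv]
    | add u v hu hv => simp only [map_add, hu, hv]
  have key : (TensorProduct.map delta delta) (delta x)
      = Phii k H (((delta.lTensor H).rTensor H) ((delta.rTensor H) (delta x))) := by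
    rw [n1, ← pcoassoc hH, n2]
    have comp1 : ((delta.rTensor H).rTensor H) ((delta.rTensor H) (delta x))
        = ((TensorProduct.assoc k H H H).symm.toLinearMap.rTensor H)
            (((delta.lTensor H).rTensor H) ((delta.rTensor H) (delta x))) := by
      have e1 : ((delta.rTensor H).rTensor H) ∘ₗ (delta.rTensor H)
          = ((delta.rTensor H) ∘ₗ delta).rTensor H := by
        rw [LinearMap.rTensor_comp]
      have e2 : ((TensorProduct.assoc k H H H).symm.toLinearMap.rTensor H)
            ∘ₗ ((delta.lTensor H).rTensor H) ∘ₗ (delta.rTensor H)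
          = ((TensorProduct.assoc k H H H).symm.toLinearMap ∘ₗ delta.lTensor H ∘ₗ delta).rTensor H := by
        rw [LinearMap.rTensor_comp, LinearMap.rTensor_comp]
      calc ((delta.rTensor H).rTensor H) ((delta.rTensor H) (delta x))
          = (((delta.rTensor H) ∘ₗ delta).rTensor H) (delta x) := LinearMap.congr_fun e1 (delta x)
        _ = (((TensorProduct.assoc k H H H).symm.toLinearMap ∘ₗ delta.lTensor H ∘ₗ delta).rTensor H) (delta x) := by
            rw [hco]
        _ = _ := (LinearMap.congr_fun e2 (delta x)).symm
    rw [comp1, n3]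
  have swap2 : ∀ (s : (H ⊗[k] H) ⊗[k] H),
      (((TensorProduct.comm k H H).toLinearMap.lTensor H).rTensor H)
        (((delta.lTensor H).rTensor H) s) = ((delta.lTensor H).rTensor H) s := by
    intro s
    have e3 : (((TensorProduct.comm k H H).toLinearMap.lTensor H).rTensor H)
          ∘ₗ ((delta.lTensor H).rTensor H)
        = ((((TensorProduct.comm k H H).toLinearMap ∘ₗ delta).lTensor H).rTensor H) := by
      rw [← LinearMap.rTensor_comp, ← LinearMap.lTensor_comp]
    have e4 := LinearMap.congr_fun e3 s
    simp only [LinearMap.comp_apply] at e4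
    rw [e4, hcc]
  rw [key, n4, swap2, ← key]

lemma KPsi (hcc : (TensorProduct.comm k H H).toLinearMap ∘ₗ delta = delta) (x : H) :
    Kmap k H mul delta ((TensorProduct.map lam lam) ∘ₗ delta) x = eps x • (one ⊗ₜ[k] one) := by
  have h0 : ∀ (t : H ⊗[k] H),
      (TensorProduct.map delta ((TensorProduct.map lam lam) ∘ₗ delta)) t
        = (LinearMap.lTensor (H ⊗[k] H) (TensorProduct.map lam lam))
            ((TensorProduct.map delta delta) t) := by
    intro t
    induction t using TensorProduct.induction_on with
    | zero => simp
    | tmul a b => simp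
    | add u v hu hv => simp only [map_add, hu, hv]
  have h1 : ∀ (T : (H ⊗[k] H) ⊗[k] (H ⊗[k] H)),
      (TensorProduct.tensorTensorTensorComm k H H H H)
        ((LinearMap.lTensor (H ⊗[k] H) (TensorProduct.map lam lam)) T)
        = (TensorProduct.map (lam.lTensor H) (lam.lTensor H))
            ((TensorProduct.tensorTensorTensorComm k H H H H) T) := by
    intro T
    induction T using TensorProduct.induction_on with
    | zero => simp
    | tmul u v =>
      induction u using TensorProduct.induction_on with
      | zero => simp
      | tmul a b =>
        induction v using TensorProduct.induction_on with
        | zero => simp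
        | tmul c d => simp [TensorProduct.tensorTensorTensorComm]
        | add u v hu hv => simp only [TensorProduct.tmul_add, map_add, hu, hv]
      | add u v hu hv => simp only [add_tmul, map_add, hu, hv]
    | add u v hu hv => simp only [map_add, hu, hv]
  have h2 : ∀ (t : H ⊗[k] H),
      (TensorProduct.map mul mul) ((TensorProduct.map (lam.lTensor H) (lam.lTensor H))
        ((TensorProduct.map delta delta) t))
        = ((TensorProduct.lid k k) ((TensorProduct.map eps eps) t)) • (one ⊗ₜ[k] one) := by
    intro t
    induction t using TensorProduct.induction_on with
    | zero => simp
    | tmul a b =>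
      simp only [TensorProduct.map_tmul, sum_mul_lam hH]
      simp [TensorProduct.smul_tmul', smul_smul, mul_comm]
    | add u v hu hv => simp only [map_add, hu, hv, add_smul]
  have h3 : ∀ (t : H ⊗[k] H),
      ((TensorProduct.lid k k) ((TensorProduct.map eps eps) t))
        = eps ((TensorProduct.rid k H) ((eps.lTensor H) t)) := by
    intro t
    induction t using TensorProduct.induction_on with
    | zero => simp
    | tmul a b => simp [mul_comm]
    | add u v hu hv => simp [hu, hv]
  show (TensorProduct.map mul mul) ((TensorProduct.tensorTensorTensorComm k H H H H)
        ((TensorProduct.map delta ((TensorProduct.map lam lam) ∘ₗ delta)) (delta x))) = _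
  rw [h0, h1, midswap hH hcc, h2, h3, hH.counit_right]

/-- Anti-comultiplicativity (cocommutative case): `δ(λ x) = (λ ⊗ λ)(δ x)`. -/
lemma delta_lam (hcc : (TensorProduct.comm k H H).toLinearMap ∘ₗ delta = delta) (x : H) :
    delta (lam x) = (TensorProduct.map lam lam) (delta x) := by
  have hK : Kmap k H mul delta (delta ∘ₗ lam)
      = Kmap k H mul delta ((TensorProduct.map lam lam) ∘ₗ delta) :=
    LinearMap.ext fun y => (KPhi hH y).trans (KPsi hH hcc y).symm
  have recov : ∀ (F : H →ₗ[k] H ⊗[k] H),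
      starRmap k H mul ∘ₗ (TensorProduct.map lam (InnerK k H mul delta lam (Kmap k H mul delta F)))
        ∘ₗ delta = F := by
    intro F
    have hI : InnerK k H mul delta lam (Kmap k H mul delta F) = MFmap k H mul delta F :=
      LinearMap.ext (stageM hH F)
    rw [hI]
    exact LinearMap.ext (stageN hH F)
  have h1 := LinearMap.congr_fun (recov (delta ∘ₗ lam)) x
  have h2 := LinearMap.congr_fun (recov ((TensorProduct.map lam lam) ∘ₗ delta)) x
  rw [hK] at h1
  simp only [LinearMap.comp_apply] at h1 h2
  exact h1.symm.trans h2

end Aux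

/-- For a cocommutative Hopf quasigroup `H`, the opposite magma `H^op = (H, 1, μ ∘ swap)`
with the coaction `x ↦ x₍₁₎ ⊗ λ(x₍₂₎)` is a right `H`-comodule magma. -/
theorem op_comodule_magma
    (hH : IsHopfQuasigroup k H mul one eps delta lam)
    (hcc : (TensorProduct.comm k H H).toLinearMap ∘ₗ delta = delta) :
    IsComoduleMagma k H mul one eps delta
      (mul ∘ₗ (TensorProduct.comm k H H).toLinearMap) one
      (lam.lTensor H ∘ₗ delta) := by
  refine ⟨?_, ?_, ?_, ?_, ?_, ?_⟩
  · intro b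
    simp [hH.mul_one]
  · intro b
    simp [hH.one_mul]
  · intro b
    have h : ∀ (t : H ⊗[k] H), (TensorProduct.rid k H) ((eps.lTensor H) ((lam.lTensor H) t))
        = (TensorProduct.rid k H) ((eps.lTensor H) t) := by
      intro t
      induction t using TensorProduct.induction_on with
      | zero => simp
      | tmul a c => simp [eps_lam hH]
      | add u v hu hv => simp [hu, hv]
    simp only [LinearMap.comp_apply]
    rw [h, hH.counit_right]
  · apply LinearMap.ext; intro x
    simp only [LinearMap.comp_apply, LinearEquiv.coe_coe]
    have h1 : ∀ (t : H ⊗[k] H),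
        ((lam.lTensor H ∘ₗ delta).rTensor H) ((lam.lTensor H) t)
          = (TensorProduct.map (lam.lTensor H) lam) ((delta.rTensor H) t) := by
      intro t
      induction t using TensorProduct.induction_on with
      | zero => simp
      | tmul a b => simp
      | add u v hu hv => simp only [map_add, hu, hv]
    have h2 : ∀ (r : H ⊗[k] (H ⊗[k] H)),
        (TensorProduct.map (lam.lTensor H) lam) ((TensorProduct.assoc k H H H).symm r)
          = (TensorProduct.assoc k H H H).symm
              ((LinearMap.lTensor H (TensorProduct.map lam lam)) r) := by
      intro r
      induction r using TensorProduct.induction_on with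
      | zero => simp
      | tmul a mn =>
        induction mn using TensorProduct.induction_on with
        | zero => simp
        | tmul m n => simp
        | add u v hu hv => simp only [TensorProduct.tmul_add, map_add, hu, hv]
      | add u v hu hv => simp only [map_add, hu, hv]
    have h3 : ∀ (t : H ⊗[k] H),
        (delta.lTensor H) ((lam.lTensor H) t)
          = (LinearMap.lTensor H (TensorProduct.map lam lam)) ((delta.lTensor H) t) := by
      intro t
      induction t using TensorProduct.induction_on with
      | zero => simp
      | tmul a b => simp [delta_lam hH hcc]
      | add u v hu hv => simp only [map_add, hu, hv]
    rw [h1, ← pcoassoc' hH, h2, ← h3]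
  · apply TensorProduct.ext'; intro x y
    have claim : ∀ (s t : H ⊗[k] H),
        (lam.lTensor H) ((TensorProduct.map mul mul)
            ((TensorProduct.tensorTensorTensorComm k H H H H) (s ⊗ₜ[k] t)))
          = (TensorProduct.map (mul ∘ₗ (TensorProduct.comm k H H).toLinearMap) mul)
              ((TensorProduct.tensorTensorTensorComm k H H H H)
                (((lam.lTensor H) t) ⊗ₜ[k] ((lam.lTensor H) s))) := by
      intro s t
      induction s using TensorProduct.induction_on with
      | zero => simp
      | tmul y1 y2 =>
        induction t using TensorProduct.induction_on with
        | zero => simp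
        | tmul x1 x2 => simp [TensorProduct.tensorTensorTensorComm, anti_mul hH]
        | add u v hu hv => simp only [TensorProduct.tmul_add, add_tmul, map_add, hu, hv]
      | add u v hu hv => simp only [TensorProduct.tmul_add, add_tmul, map_add, hu, hv]
    simp only [LinearMap.comp_apply, LinearEquiv.coe_coe, TensorProduct.comm_tmul,
      TensorProduct.map_tmul]
    rw [pdelta_mul hH y x, claim]
  · show (lam.lTensor H) (delta one) = one ⊗ₜ[k] one
    rw [hH.delta_one]
    simp [lam_one hH]
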